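/- Let T be a p-string of length n ending with a unique smallest end-marker $, let R⁻¹(i) be the starting position of the lexicographically i-th p-encoded suffix of T, and LCP∞[i] = lcp∞(⟨T[R⁻¹(i−1)..]⟩, ⟨T[R⁻¹(i)..]⟩) for 1 < i ≤ n, LCP∞[1] undefined/0. Then for any 1 ≤ i < j ≤ n, lcp∞(⟨T[R⁻¹(i)..]⟩, ⟨T[R⁻¹(j)..]⟩) = min{ LCP∞[g] : i+1 ≤ g ≤ j }. -/

import Mathlib

/-- Symbols of a parameterized string: static symbols `s a` (from Σs) and
parameter symbols `p a` (from Σp). -/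
inductive PSym where
  | s : ℕ → PSym
  | p : ℕ → PSym
deriving DecidableEq

/-- Symbols of a p-encoded string: static symbols, finite distances, and ∞. -/
inductive Enc where
  | s : ℕ → Enc
  | fin : ℕ → Enc
  | inf : Enc
deriving DecidableEq

/-- Order embedding: static symbols < natural numbers < ∞. -/
def Enc.toPair : Enc → ℕ ×ₗ ℕ
  | .s a => toLex (0, a)
  | .fin d => toLex (1, d)
  | .inf => toLex (2, 0)

instance : LinearOrder Enc :=
  LinearOrder.lift' Enc.toPair (by
    rintro (a | a | _) (b | b | _) h <;>
      simp_all [Enc.toPair, toLex_inj, Prod.ext_iff])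

/-- Largest position `j < i` (0-based) carrying the same symbol as position `i`. -/
def prevOcc (w : List PSym) (i : ℕ) : Option ℕ :=
  ((List.range i).filter (fun j => w[j]? = w[i]?)).max?

/-- The p-encoding of position `i` (0-based) of `w`. -/
def pencSym (w : List PSym) (i : ℕ) : Enc :=
  match w[i]? with
  | some (PSym.s a) => Enc.s a
  | some (PSym.p _) =>
    match prevOcc w i with
    | some j => Enc.fin (i - j)
    | none => Enc.inf
  | none => Enc.inf

/-- The p-encoding ⟨w⟩ of a p-string `w`. -/
def penc (w : List PSym) : List Enc :=
  (List.range w.length).map (pencSym w)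

/-- Lexicographic (strict) order on p-encoded strings. -/
def lexLt (x y : List Enc) : Prop := List.Lex (· < ·) x y

def lexLe (x y : List Enc) : Prop := lexLt x y ∨ x = y

/-- Length of the longest common prefix. -/
def lcp {α : Type*} [DecidableEq α] : List α → List α → ℕ
  | a :: x, b :: y => if a = b then lcp x y + 1 else 0
  | _, _ => 0

/-- Number of ∞'s in the longest common prefix of two p-encoded strings. -/
def lcpInf (x y : List Enc) : ℕ := (x.take (lcp x y)).count Enc.inf

/-- Number of distinct p-symbols occurring in `w` (denoted |w|_p). -/
def distinctP (w : List PSym) : ℕ :=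
  (w.filterMap (fun s => match s with | PSym.p a => some a | PSym.s _ => none)).dedup.length

/-- For `w` starting with a p-symbol: the rank of `w[1]` among the distinct
p-symbols of `w[1..h+1]`, where `h+1 = min{|w|, second occurrence of w[1] in w}`. -/
def fceRank (w : List PSym) : ℕ :=
  match w with
  | [] => 0
  | c :: rest => distinctP ((c :: rest).take (min (c :: rest).length (2 + rest.idxOf c)))

/-- The function fce from the paper; `fce ε = $` is modelled as `Enc.s 0`. -/
def fce (w : List PSym) : Enc :=
  match w with
  | [] => Enc.s 0
  | PSym.s a :: _ => Enc.s a
  | w => Enc.fin (fceRank w)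


/-! For lexicographically sorted `x < y < z`, the longest common prefix of `x` and `z` is the
shorter of those of `x, y` and of `y, z`. The number of `∞`'s in a prefix of `y` is monotone in
the prefix length, so `lcp∞` inherits this rule, and along the sorted suffix array it unfolds
into the minimum of the adjacent `LCP∞` values. -/

section Lcp

variable {α : Type*}

theorem take_lcp_eq_take_lcp [DecidableEq α] (x y : List α) :
    x.take (lcp x y) = y.take (lcp x y) := by
  induction x generalizing y with
  | nil => simp [lcp]
  | cons a x ih =>
    cases y with
    | nil => simp [lcp]
    | cons b y =>
      by_cases hab : a = b
      · subst hab; simp [lcp, ih]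
      · simp [lcp, hab]

theorem lcp_eq_min_of_lex [LinearOrder α] [DecidableEq α] {x y z : List α}
    (hxy : List.Lex (· < ·) x y) (hyz : List.Lex (· < ·) y z) :
    lcp x z = min (lcp x y) (lcp y z) := by
  induction hxy generalizing z with
  | nil => cases hyz <;> simp [lcp]
  | @cons a x y hxy ih =>
    cases hyz with
    | cons hyz => simp [lcp, ih hyz, Nat.succ_min_succ]
    | rel hab => simp [lcp, hab.ne]
  | @rel a b x y hab =>
    cases hyz with
    | cons => simp [lcp, hab.ne]
    | rel hbc => simp [lcp, hab.ne, (hab.trans hbc).ne]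

theorem monotone_count_take [BEq α] (l : List α) (a : α) :
    Monotone fun m => (l.take m).count a :=
  fun _ _ h => (List.take_sublist_take_left h).count_le a

end Lcp

theorem lcpInf_eq_min {x y z : List Enc} (hxy : lexLt x y) (hyz : lexLt y z) :
    lcpInf x z = min (lcpInf x y) (lcpInf y z) := by
  have hprefix : x.take (lcp x z) = y.take (lcp x z) := by
    rw [lcp_eq_min_of_lex hxy hyz, min_comm, ← List.take_take, take_lcp_eq_take_lcp,
      List.take_take]
  rw [lcpInf, lcpInf, lcpInf, hprefix, take_lcp_eq_take_lcp x y, lcp_eq_min_of_lex hxy hyz,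
    (monotone_count_take y Enc.inf).map_min]

theorem eq_sInf_adjacent_of_eq_min (F : ℕ → ℕ → ℕ) (n : ℕ)
    (hF : ∀ i j k, i < j → j < k → k < n → F i k = min (F i j) (F j k))
    {i j : ℕ} (hij : i < j) (hjn : j < n) :
    F i j = sInf {v : ℕ | ∃ g, i + 1 ≤ g ∧ g ≤ j ∧ v = F (g - 1) g} := by
  induction j, Nat.succ_le_of_lt hij using Nat.le_induction with
  | base =>
    have hsingle :
        {v : ℕ | ∃ g, i + 1 ≤ g ∧ g ≤ i + 1 ∧ v = F (g - 1) g} = {F i (i + 1)} := by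
      ext v
      constructor
      · rintro ⟨g, hg₁, hg₂, rfl⟩
        obtain rfl : g = i + 1 := le_antisymm hg₂ hg₁
        simp
      · rintro rfl
        exact ⟨i + 1, le_rfl, le_rfl, by simp⟩
    rw [hsingle, csInf_singleton]
  | succ j hle ih =>
    have hunion : {v : ℕ | ∃ g, i + 1 ≤ g ∧ g ≤ j + 1 ∧ v = F (g - 1) g} =
        {v : ℕ | ∃ g, i + 1 ≤ g ∧ g ≤ j ∧ v = F (g - 1) g} ∪ {F j (j + 1)} := by
      ext v
      constructor
      · rintro ⟨g, hg₁, hg₂, rfl⟩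
        rcases Nat.lt_or_ge g (j + 1) with hg | hg
        · exact Or.inl ⟨g, hg₁, Nat.le_of_lt_succ hg, rfl⟩
        · obtain rfl : g = j + 1 := le_antisymm hg₂ hg
          simp
      · rintro (⟨g, hg₁, hg₂, rfl⟩ | rfl)
        · exact ⟨g, hg₁, hg₂.trans j.le_succ, rfl⟩
        · exact ⟨j + 1, hle.trans j.le_succ, le_rfl, by simp⟩
    rw [hF i j (j + 1) hle j.lt_succ_self hjn, ih hle (Nat.lt_of_succ_lt hjn), hunion,
      csInf_union (OrderBot.bddBelow _) ?_ (OrderBot.bddBelow _) (Set.singleton_nonempty _),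
      csInf_singleton]
    exact ⟨_, j, hle, le_rfl, rfl⟩

theorem stmt12_general (T : List PSym) (n : ℕ)
    -- `Rinv i` is the (0-based) starting position of the lexicographically
    -- (i+1)-st p-encoded suffix of `T`
    (Rinv : ℕ → ℕ)
    (hsorted : ∀ i j, i < j → j < n →
      lexLt (penc (T.drop (Rinv i))) (penc (T.drop (Rinv j))))
    (i j : ℕ) (hij : i < j) (hjn : j < n) :
    lcpInf (penc (T.drop (Rinv i))) (penc (T.drop (Rinv j))) =
      sInf {v : ℕ | ∃ g, i + 1 ≤ g ∧ g ≤ j ∧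
        v = lcpInf (penc (T.drop (Rinv (g - 1)))) (penc (T.drop (Rinv g)))} :=
  eq_sInf_adjacent_of_eq_min
    (fun a b => lcpInf (penc (T.drop (Rinv a))) (penc (T.drop (Rinv b)))) n
    (fun a b c hab hbc hcn =>
      lcpInf_eq_min (hsorted a b hab (hbc.trans hcn)) (hsorted b c hbc hcn))
    hij hjn

theorem stmt12 (T : List PSym) (n : ℕ) (hn : n = T.length)
    -- `$` (modelled as `PSym.s 0`, the smallest symbol) is the end-marker of `T`
    (hend : T.getLast? = some (PSym.s 0))
    (huniq : ∀ i, i + 1 < n → T[i]? ≠ some (PSym.s 0))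
    -- `Rinv i` is the (0-based) starting position of the lexicographically
    -- (i+1)-st p-encoded suffix of `T`
    (Rinv : ℕ → ℕ) (hdom : ∀ i < n, Rinv i < n)
    (hsorted : ∀ i j, i < j → j < n →
      lexLt (penc (T.drop (Rinv i))) (penc (T.drop (Rinv j))))
    (i j : ℕ) (hij : i < j) (hjn : j < n) :
    lcpInf (penc (T.drop (Rinv i))) (penc (T.drop (Rinv j))) =
      sInf {v : ℕ | ∃ g, i + 1 ≤ g ∧ g ≤ j ∧
        v = lcpInf (penc (T.drop (Rinv (g - 1)))) (penc (T.drop (Rinv g)))} :=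
  stmt12_general T n Rinv hsorted i j hij hjn
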